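/- For every ε > 0 and every continuous function f : I^n → ℝ^{n-1}, there exist a point p ∈ ℝ^{n-1} and a compact connected subset S ⊆ f^{-1}[B(p, ε)] (preimage of the open Euclidean ball of radius ε about p) such that S intersects two opposite faces of I^n for some coordinate direction. -/

import Mathlib

/-!
After scaling `f` by `ε⁻¹`, cover `ℝⁿ⁻¹` by `n` classes of closed bricks such that the bricks of
one class are pairwise disjoint and have sup-diameter `< 1`: in class `j` every coordinate is
either within `j / 4n` of an integer or at distance at least `(j + 1) / 4n` from all integers,
and by pigeonhole each point fits some class. Their preimages give `n` closed sets `K i` covering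
the cube, and it suffices that some `K i` contains a continuum joining the two faces `x i = 0`
and `x i = 1`, since such a continuum lies in a single brick. Otherwise, because quasi-components
of compact Hausdorff spaces are connected, each `K i` splits into two disjoint closed parts, each
avoiding one of these faces; Urysohn functions separating "face `x i = 0` plus the first part"
from "face `x i = 1` plus the second part" then have no common zero, contradicting the
Poincaré–Miranda theorem. The latter follows from a cubical Sperner lemma, proved by the
door-counting parity argument on the Freudenthal triangulation, by induction on the dimension.
-/

namespace Finset

variable {α β : Type*} [DecidableEq α] [DecidableEq β] {s : Finset α} {t : Finset β} {b : β}
  {g : α → β}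

theorem image_erase_eq_iff (hb : b ∉ t) (hg : ∀ a ∈ s, g a ∈ insert b t) (k : α) :
    (s.erase k).image g = t ↔ t ⊆ (s.erase k).image g ∧ ∀ j ∈ s.erase k, g j ≠ b := by
  refine ⟨fun h => ⟨h.ge, fun j hj hjb => hb (h ▸ hjb ▸ mem_image_of_mem g hj)⟩,
    fun ⟨hsub, hne⟩ => Subset.antisymm ?_ hsub⟩
  intro y hy
  obtain ⟨j, hj, rfl⟩ := mem_image.1 hy
  exact (mem_insert.1 (hg j (mem_of_mem_erase hj))).resolve_left (hne j hj)

theorem card_filter_image_erase_eq_of_image_eq_insert (hb : b ∉ t)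
    (hcard : s.card = t.card + 1) (hs : s.image g = insert b t) :
    (s.filter fun k => (s.erase k).image g = t).card = 1 := by
  have hg : ∀ a ∈ s, g a ∈ insert b t := fun a ha => hs ▸ mem_image_of_mem g ha
  have hinj : Set.InjOn g s :=
    injOn_of_card_image_eq (by rw [hs, card_insert_of_notMem hb, hcard])
  obtain ⟨k₀, hk₀, hgk₀⟩ := mem_image.1 (hs ▸ mem_insert_self b t)
  rw [card_eq_one]
  refine ⟨k₀, eq_singleton_iff_unique_mem.2 ⟨mem_filter.2 ⟨hk₀, ?_⟩, fun k hk => ?_⟩⟩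
  · refine (image_erase_eq_iff hb hg k₀).2 ⟨fun y hy => ?_, fun j hj hjb => ?_⟩
    · obtain ⟨j, hj, rfl⟩ := mem_image.1 (hs ▸ mem_insert_of_mem hy : y ∈ s.image g)
      exact mem_image_of_mem g (mem_erase.2 ⟨fun h => hb (by rwa [h, hgk₀] at hy), hj⟩)
    · exact (mem_erase.1 hj).1 (hinj (mem_of_mem_erase hj) hk₀ (hjb.trans hgk₀.symm))
  · obtain ⟨hks, hk⟩ := mem_filter.1 hk
    by_contra hne
    exact ((image_erase_eq_iff hb hg k).1 hk).2 k₀ (mem_erase.2 ⟨Ne.symm hne, hk₀⟩) hgk₀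

theorem card_filter_image_erase_eq_of_image_eq (hcard : s.card = t.card + 1)
    (hs : s.image g = t) :
    (s.filter fun k => (s.erase k).image g = t).card = 2 := by
  obtain ⟨j₁, hj₁, j₂, hj₂, hne, hgj⟩ : ∃ j₁ ∈ s, ∃ j₂ ∈ s, j₁ ≠ j₂ ∧ g j₁ = g j₂ :=
    exists_ne_map_eq_of_card_lt_of_maps_to (by omega) fun a ha => hs ▸ mem_image_of_mem g ha
  have key : ∀ k ∈ s, (s.erase k).image g = t ↔ ∃ j ∈ s.erase k, g j = g k := by
    intro k hk
    refine ⟨fun h => mem_image.1 (h ▸ hs ▸ mem_image_of_mem g hk), fun ⟨j, hj, hjk⟩ => ?_⟩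
    refine Subset.antisymm (hs ▸ image_subset_image (erase_subset k s)) fun y hy => ?_
    obtain ⟨i, hi, rfl⟩ := mem_image.1 (hs ▸ hy)
    by_cases hik : i = k
    · subst hik
      exact hjk ▸ mem_image_of_mem g hj
    · exact mem_image_of_mem g (mem_erase.2 ⟨hik, hi⟩)
  have hinj : Set.InjOn g (s.erase j₁) := by
    refine injOn_of_card_image_eq ?_
    rw [((key j₁ hj₁).2 ⟨j₂, mem_erase.2 ⟨hne.symm, hj₂⟩, hgj.symm⟩), card_erase_of_mem hj₁]
    omega
  rw [← card_pair hne]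
  congr 1
  ext k
  simp only [mem_filter, mem_insert, mem_singleton]
  constructor
  · rintro ⟨hk, h⟩
    obtain ⟨j, hj, hjk⟩ := (key k hk).1 h
    by_contra! hk₁₂
    have hk' : k ∈ s.erase j₁ := mem_erase.2 ⟨hk₁₂.1, hk⟩
    by_cases hjj₁ : j = j₁
    · subst hjj₁
      exact hk₁₂.2 (hinj (mem_erase.2 ⟨hne.symm, hj₂⟩) hk' (hgj.symm.trans hjk)).symm
    · exact (mem_erase.1 hj).1 (hinj (mem_erase.2 ⟨hjj₁, mem_of_mem_erase hj⟩) hk' hjk)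
  · rintro (rfl | rfl)
    · exact ⟨hj₁, (key _ hj₁).2 ⟨j₂, mem_erase.2 ⟨hne.symm, hj₂⟩, hgj.symm⟩⟩
    · exact ⟨hj₂, (key _ hj₂).2 ⟨j₁, mem_erase.2 ⟨hne, hj₁⟩, hgj⟩⟩

theorem card_filter_image_erase_eq_mod_two (hb : b ∉ t) (hcard : s.card = t.card + 1)
    (hg : ∀ a ∈ s, g a ∈ insert b t) :
    ((s.filter fun k => (s.erase k).image g = t).card : ZMod 2) =
      if s.image g = insert b t then 1 else 0 := by
  split_ifs with hfull
  · rw [card_filter_image_erase_eq_of_image_eq_insert hb hcard hfull, Nat.cast_one]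
  by_cases hts : t ⊆ s.image g
  · have hs : s.image g = t := by
      refine Subset.antisymm (fun y hy => ?_) hts
      obtain ⟨a, ha, rfl⟩ := mem_image.1 hy
      refine (mem_insert.1 (hg a ha)).resolve_left fun hab => hfull ?_
      exact Subset.antisymm (image_subset_iff.2 hg) (insert_subset (hab ▸ hy) hts)
    rw [card_filter_image_erase_eq_of_image_eq hcard hs]
    rfl
  · rw [filter_eq_empty_iff.2 fun k _ h => hts (h.ge.trans (image_subset_image (erase_subset k s))),
      card_empty, Nat.cast_zero]

theorem range_succ_erase_self (m : ℕ) : (range (m + 1)).erase m = range m := by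
  rw [range_add_one, erase_insert notMem_range_self]

theorem range_succ_erase_zero (m : ℕ) : (range (m + 1)).erase 0 = (range m).image (· + 1) := by
  ext j
  simp only [mem_erase, mem_range, mem_image]
  constructor
  · rintro ⟨h0, hm⟩
    exact ⟨j - 1, by omega, by omega⟩
  · rintro ⟨i, hi, rfl⟩
    omega

end Finset

/-! ### Cubical Sperner lemma -/

def InBox {n : ℕ} (N : ℕ) (v : Fin n → ℤ) : Prop := ∀ a, 0 ≤ v a ∧ v a ≤ N

def SpernerBoundary {n : ℕ} (N : ℕ) (U : Fin n → Set (Fin n → ℤ)) : Prop :=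
  ∀ v, InBox N v → ∀ i, (v i = 0 → v ∈ U i) ∧ (v i = N → v ∉ U i)

theorem InBox.snoc_zero {n N : ℕ} {w : Fin n → ℤ} (hw : InBox N w) :
    InBox N (Fin.snoc w 0 : Fin (n + 1) → ℤ) := by
  intro a
  cases a using Fin.lastCases with
  | last => simp
  | cast a => simpa using hw a

namespace Freudenthal

open Finset Equiv Fin.NatCast

variable {n : ℕ}

/-- `(x, π)` encodes the simplex of the Freudenthal triangulation of the cube `x + [0,1]ⁿ` with
vertices `x + e (π 0) + ⋯ + e (π (j - 1))`, `j = 0, …, n`. -/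
abbrev Simplex (n : ℕ) := (Fin n → ℤ) × Perm (Fin n)

def vertex (s : Simplex n) (j : ℕ) : Fin n → ℤ :=
  fun a => s.1 a + if (s.2.symm a : ℕ) < j then 1 else 0

theorem vertex_apply_eq_or (s : Simplex n) (j : ℕ) (a : Fin n) :
    vertex s j a = s.1 a ∨ vertex s j a = s.1 a + 1 := by
  unfold vertex
  split_ifs <;> simp

def shiftUp (s : Simplex (n + 1)) : Simplex (n + 1) :=
  (s.1 + Pi.single (s.2 0) 1, (finRotate (n + 1)).trans s.2)

def shiftDown (s : Simplex (n + 1)) :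
    Simplex (n + 1) :=
  (s.1 - Pi.single (s.2 (Fin.last n)) 1, (finRotate (n + 1)).symm.trans s.2)

def swapAt (k : ℕ) (s : Simplex (n + 1)) :
    Simplex (n + 1) :=
  (s.1, (Equiv.swap (((k - 1 : ℕ) : Fin (n + 1))) ((k : ℕ) : Fin (n + 1))).trans s.2)

theorem finRotate_symm_zero : (finRotate (n + 1)).symm 0 = Fin.last n := by
  rw [Equiv.symm_apply_eq, finRotate_apply, Fin.last_add_one]

theorem val_finRotate_of_ne_last {t : Fin (n + 1)} (ht : t ≠ Fin.last n) :
    ((finRotate (n + 1) t : Fin (n + 1)) : ℕ) = (t : ℕ) + 1 := by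
  rw [finRotate_apply]
  exact Fin.val_add_one_of_lt (lt_of_le_of_ne (Fin.le_last t) ht)

theorem val_finRotate_symm {t : Fin (n + 1)} (ht : t ≠ 0) :
    (((finRotate (n + 1)).symm t : Fin (n + 1)) : ℕ) = (t : ℕ) - 1 := by
  have h := (finRotate (n + 1)).apply_symm_apply t
  have hl : (finRotate (n + 1)).symm t ≠ Fin.last n := by
    rintro hl
    rw [hl, finRotate_last] at h
    exact ht h.symm
  have := val_finRotate_of_ne_last hl
  rw [h] at this
  omega

theorem shiftDown_shiftUp (s : Simplex (n + 1)) :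
    shiftDown (shiftUp s) = s := by
  refine Prod.ext ?_ (by ext; simp [shiftDown, shiftUp])
  simp only [shiftDown, shiftUp, Equiv.trans_apply, finRotate_last, add_sub_cancel_right]

theorem shiftUp_shiftDown (s : Simplex (n + 1)) :
    shiftUp (shiftDown s) = s := by
  refine Prod.ext ?_ (by ext; simp [shiftDown, shiftUp])
  simp only [shiftDown, shiftUp, Equiv.trans_apply, finRotate_symm_zero, sub_add_cancel]

theorem swapAt_swapAt (k : ℕ) (s : Simplex (n + 1)) :
    swapAt k (swapAt k s) = s := by
  ext a <;> simp [swapAt]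

theorem vertex_shiftUp (s : Simplex (n + 1)) {j : ℕ} (hj : j ≤ n) :
    vertex (shiftUp s) j = vertex s (j + 1) := by
  funext a
  simp only [vertex, shiftUp, Pi.add_apply, Pi.single_apply, Equiv.symm_trans_apply]
  by_cases h0 : s.2.symm a = 0
  · rw [if_pos (by rw [← h0, Equiv.apply_symm_apply])]
    simp only [h0, finRotate_symm_zero, Fin.val_last, Fin.val_zero]
    split_ifs <;> omega
  · have ha : a ≠ s.2 0 := fun hc => h0 (by rw [hc, Equiv.symm_apply_apply])
    have h1 := val_finRotate_symm h0
    have h2 : (s.2.symm a : ℕ) ≠ 0 := fun hc => h0 (Fin.ext hc)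
    rw [if_neg ha]
    split_ifs <;> omega

theorem vertex_shiftDown (s : Simplex (n + 1)) {j : ℕ} (hj : j ≤ n) :
    vertex (shiftDown s) (j + 1) = vertex s j := by
  rw [← vertex_shiftUp _ hj, shiftUp_shiftDown]

theorem vertex_swapAt (s : Simplex (n + 1)) {k j : ℕ}
    (h1 : 1 ≤ k) (h2 : k ≤ n) (hjk : j ≠ k) :
    vertex (swapAt k s) j = vertex s j := by
  have hp : ((((k - 1 : ℕ)) : Fin (n + 1)) : ℕ) = k - 1 := Fin.val_cast_of_lt (by omega)
  have hq : (((k : ℕ) : Fin (n + 1)) : ℕ) = k := Fin.val_cast_of_lt (by omega)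
  funext a
  simp only [vertex, swapAt, Equiv.symm_trans_apply, Equiv.symm_swap]
  by_cases htp : s.2.symm a = ((k - 1 : ℕ) : Fin (n + 1))
  · simp only [htp, Equiv.swap_apply_left]
    split_ifs <;> omega
  · by_cases htq : s.2.symm a = ((k : ℕ) : Fin (n + 1))
    · simp only [htq, Equiv.swap_apply_right]
      split_ifs <;> omega
    · simp only [Equiv.swap_apply_of_ne_of_ne htp htq]

theorem swapAt_snd_ne (s : Simplex (n + 1)) {k : ℕ}
    (h1 : 1 ≤ k) (h2 : k ≤ n) : (swapAt k s).2 ≠ s.2 := by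
  intro h
  have := congrArg (fun π : Perm (Fin (n + 1)) => π ((k - 1 : ℕ) : Fin (n + 1))) h
  simp only [swapAt, Equiv.trans_apply, Equiv.swap_apply_left, EmbeddingLike.apply_eq_iff_eq,
    Fin.ext_iff, Fin.val_cast_of_lt (show k < n + 1 by omega),
    Fin.val_cast_of_lt (show k - 1 < n + 1 by omega)] at this
  omega

def facet (s : Simplex n) (k : ℕ) : Finset (Fin n → ℤ) :=
  ((range (n + 1)).erase k).image (vertex s)

/-- `pivot (s, k)` is the other simplex of the triangulation containing the facet of `s` opposite
its vertex `k`, together with the index of its own vertex opposite that facet. -/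
def pivot (p : Simplex (n + 1) × ℕ) :
    Simplex (n + 1) × ℕ :=
  if p.2 = 0 then (shiftUp p.1, n + 1)
  else if p.2 = n + 1 then (shiftDown p.1, 0)
  else (swapAt p.2 p.1, p.2)

theorem pivot_pivot (p : Simplex (n + 1) × ℕ) : pivot (pivot p) = p := by
  obtain ⟨s, k⟩ := p
  unfold pivot
  by_cases h0 : k = 0
  · simp [h0, shiftDown_shiftUp]
  by_cases ht : k = n + 1
  · simp [ht, shiftUp_shiftDown]
  · simp [h0, ht, swapAt_swapAt]

theorem pivot_ne {p : Simplex (n + 1) × ℕ} (hp : p.2 ≤ n + 1) : pivot p ≠ p := by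
  obtain ⟨s, k⟩ := p
  have hk : k ≤ n + 1 := hp
  unfold pivot
  by_cases h0 : k = 0
  · simp [h0]
  by_cases ht : k = n + 1
  · simp [ht]
  · simpa [h0, ht, Prod.ext_iff] using fun _ => swapAt_snd_ne s (k := k) (by omega) (by omega)

theorem facet_pivot {p : Simplex (n + 1) × ℕ} (hp : p.2 ≤ n + 1) :
    facet (pivot p).1 (pivot p).2 = facet p.1 p.2 := by
  obtain ⟨s, k⟩ := p
  have hk : k ≤ n + 1 := hp
  unfold pivot facet
  by_cases h0 : k = 0
  · simp only [h0, if_true]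
    rw [range_succ_erase_self, range_succ_erase_zero, image_image]
    exact image_congr fun j hj => vertex_shiftUp s (by simpa [Nat.lt_succ_iff] using hj)
  by_cases ht : k = n + 1
  · simp only [ht, if_true, if_false, Nat.add_one_ne_zero]
    rw [range_succ_erase_self, range_succ_erase_zero, image_image]
    exact image_congr fun j hj => vertex_shiftDown s (by simpa [Nat.lt_succ_iff] using hj)
  · simp only [h0, ht, if_false]
    exact image_congr fun j hj =>
      vertex_swapAt s (by omega) (by omega) (mem_erase.1 hj).1

open scoped Classical

noncomputable def label (U : Fin n → Set (Fin n → ℤ)) (v : Fin n → ℤ) : ℕ :=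
  if h : ({i | v ∉ U i} : Finset (Fin n)).Nonempty then
    (({i | v ∉ U i} : Finset (Fin n)).min' h : ℕ) + 1
  else 0

theorem label_le (U : Fin n → Set (Fin n → ℤ)) (v : Fin n → ℤ) : label U v ≤ n := by
  unfold label
  split_ifs with h
  · exact ((({i | v ∉ U i} : Finset (Fin n)).min' h)).isLt
  · exact Nat.zero_le n

theorem mem_of_label_eq_zero {U : Fin n → Set (Fin n → ℤ)} {v : Fin n → ℤ}
    (h : label U v = 0) (i : Fin n) : v ∈ U i := by
  unfold label at h
  split_ifs at h with hne
  by_contra hvi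
  exact hne ⟨i, by simpa using hvi⟩

theorem notMem_of_label_eq_succ {U : Fin n → Set (Fin n → ℤ)} {v : Fin n → ℤ} {i : Fin n}
    (h : label U v = i + 1) : v ∉ U i := by
  unfold label at h
  split_ifs at h with hne
  have hmem := min'_mem _ hne
  rwa [Fin.ext (Nat.succ_injective h), mem_filter, and_iff_right (mem_univ _)] at hmem

def faceRestrict (U : Fin (n + 1) → Set (Fin (n + 1) → ℤ)) (i : Fin n) : Set (Fin n → ℤ) :=
  {w | Fin.snoc w 0 ∈ U i.castSucc}

theorem label_snoc_zero {U : Fin (n + 1) → Set (Fin (n + 1) → ℤ)} {w : Fin n → ℤ}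
    (hlast : Fin.snoc w 0 ∈ U (Fin.last n)) :
    label U (Fin.snoc w 0) = label (faceRestrict U) w := by
  have hmiss : ({i | Fin.snoc w 0 ∉ U i} : Finset (Fin (n + 1))) =
      ({i | w ∉ faceRestrict U i} : Finset (Fin n)).image Fin.castSucc := by
    ext i
    cases i using Fin.lastCases with
    | last =>
      simp only [mem_filter, mem_univ, true_and, mem_image, hlast, not_true, false_iff]
      rintro ⟨j, -, h⟩
      exact (Fin.castSucc_lt_last j).ne h
    | cast i =>
      simp only [mem_filter, mem_univ, true_and, mem_image, Fin.castSucc_inj, exists_eq_right]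
      rfl
  unfold label
  simp only [hmiss, image_nonempty]
  split_ifs
  · rw [min'_image Fin.strictMono_castSucc.monotone, Fin.val_castSucc]
  · rfl

theorem spernerBoundary_faceRestrict {N : ℕ} {U : Fin (n + 1) → Set (Fin (n + 1) → ℤ)}
    (hU : SpernerBoundary N U) : SpernerBoundary N (faceRestrict U) := by
  intro w hw i
  simpa [faceRestrict] using hU _ hw.snoc_zero i.castSucc

noncomputable def simplices (n N : ℕ) : Finset (Simplex n) :=
  (Fintype.piFinset fun _ => Ico 0 (N : ℤ)) ×ˢ univ

theorem mem_simplices {N : ℕ} {s : Simplex n} :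
    s ∈ simplices n N ↔ ∀ a, 0 ≤ s.1 a ∧ s.1 a < N := by
  simp [simplices]

theorem inBox_vertex {N : ℕ} {s : Simplex n} (hs : s ∈ simplices n N) (j : ℕ) :
    InBox N (vertex s j) := by
  intro a
  have := mem_simplices.1 hs a
  rcases vertex_apply_eq_or s j a with h | h <;> rw [h] <;> omega

noncomputable def facetLabels (U : Fin n → Set (Fin n → ℤ)) (s : Simplex n) (k : ℕ) : Finset ℕ :=
  (facet s k).image (label U)

theorem facetLabels_eq (U : Fin n → Set (Fin n → ℤ)) (s : Simplex n) (k : ℕ) :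
    facetLabels U s k = ((range (n + 1)).erase k).image fun j => label U (vertex s j) :=
  image_image

noncomputable def fullyLabeled (n N : ℕ) (U : Fin n → Set (Fin n → ℤ)) : Finset (Simplex n) :=
  (simplices n N).filter fun s =>
    (range (n + 1)).image (fun j => label U (vertex s j)) = range (n + 1)

noncomputable def doors (n N : ℕ) (U : Fin n → Set (Fin n → ℤ)) :
    Finset (Simplex n × ℕ) :=
  (simplices n N ×ˢ range (n + 1)).filter fun p => facetLabels U p.1 p.2 = range n

/-- Doors whose facet lies in a face `v a = 0`: the facet opposite the top vertex has constant
coordinate `π (last n)`, and for a door this forces `π (last n) = last n`. -/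
noncomputable def boundaryDoors (n N : ℕ) (U : Fin (n + 1) → Set (Fin (n + 1) → ℤ)) :
    Finset (Simplex (n + 1) × ℕ) :=
  (doors (n + 1) N U).filter fun p => p.2 = n + 1 ∧ p.1.1 (p.1.2 (Fin.last n)) = 0

theorem card_doors_eq_card_fullyLabeled (N : ℕ) (U : Fin n → Set (Fin n → ℤ)) :
    ((doors n N U).card : ZMod 2) = (fullyLabeled n N U).card := by
  rw [doors, card_filter, sum_product, fullyLabeled, card_filter, Nat.cast_sum, Nat.cast_sum]
  refine sum_congr rfl fun s _ => ?_
  rw [← card_filter, Nat.cast_ite, Nat.cast_one, Nat.cast_zero]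
  simp_rw [facetLabels_eq]
  rw [range_add_one (n := n)]
  exact card_filter_image_erase_eq_mod_two notMem_range_self (by simp)
    fun j _ => mem_insert.2 <| (Nat.lt_or_eq_of_le (label_le U _)).elim
      (fun h => Or.inr (mem_range.2 h)) Or.inl

theorem shiftUp_mem_simplices {N : ℕ} {s : Simplex (n + 1)}
    (hs : s ∈ simplices (n + 1) N) (h : s.1 (s.2 0) + 1 < N) :
    shiftUp s ∈ simplices (n + 1) N := by
  rw [mem_simplices] at hs ⊢
  intro a
  by_cases ha : a = s.2 0
  · subst ha
    simpa [shiftUp] using ⟨by linarith [(hs (s.2 0)).1], h⟩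
  · simpa [shiftUp, Pi.single_apply, ha] using hs a

theorem shiftDown_mem_simplices {N : ℕ} {s : Simplex (n + 1)}
    (hs : s ∈ simplices (n + 1) N) (h : s.1 (s.2 (Fin.last n)) ≠ 0) :
    shiftDown s ∈ simplices (n + 1) N := by
  rw [mem_simplices] at hs ⊢
  intro a
  by_cases ha : a = s.2 (Fin.last n)
  · subst ha
    have := hs (s.2 (Fin.last n))
    simp only [shiftDown, Pi.sub_apply, Pi.single_eq_same]
    omega
  · simpa [shiftDown, Pi.single_apply, ha] using hs a

theorem add_one_lt_of_facetLabels_zero {N : ℕ} {U : Fin (n + 1) → Set (Fin (n + 1) → ℤ)}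
    (hU : SpernerBoundary N U) {s : Simplex (n + 1)}
    (hs : s ∈ simplices (n + 1) N) (hdoor : facetLabels U s 0 = range (n + 1)) :
    s.1 (s.2 0) + 1 < N := by
  have hlt := (mem_simplices.1 hs (s.2 0)).2
  refine lt_of_le_of_ne hlt fun hN => ?_
  obtain ⟨j, hj, hlab⟩ : ∃ j ∈ (range (n + 2)).erase 0, label U (vertex s j) = 0 :=
    mem_image.1 (facetLabels_eq U s 0 ▸ hdoor ▸ mem_range.2 (Nat.succ_pos n))
  have hval : vertex s j (s.2 0) = N := by
    simp only [vertex, Equiv.symm_apply_apply, Fin.val_zero]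
    rw [if_pos (Nat.pos_of_ne_zero (mem_erase.1 hj).1), hN]
  exact (hU _ (inBox_vertex hs j) _).2 hval (mem_of_label_eq_zero hlab _)

theorem mem_doors {N : ℕ} {U : Fin n → Set (Fin n → ℤ)} {p : Simplex n × ℕ} :
    p ∈ doors n N U ↔ p.1 ∈ simplices n N ∧ p.2 ≤ n ∧ facetLabels U p.1 p.2 = range n := by
  simp [doors, and_assoc]

theorem pivot_mem_doors_sdiff_boundaryDoors {N : ℕ} {U : Fin (n + 1) → Set (Fin (n + 1) → ℤ)}
    (hU : SpernerBoundary N U) {p : Simplex (n + 1) × ℕ}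
    (hp : p ∈ doors (n + 1) N U \ boundaryDoors n N U) :
    pivot p ∈ doors (n + 1) N U \ boundaryDoors n N U := by
  obtain ⟨hdoor, hint⟩ := mem_sdiff.1 hp
  obtain ⟨hs, hk, hlab⟩ := mem_doors.1 hdoor
  have hint : ¬(p.2 = n + 1 ∧ p.1.1 (p.1.2 (Fin.last n)) = 0) :=
    fun h => hint (mem_filter.2 ⟨hdoor, h⟩)
  have hlab' : facetLabels U (pivot p).1 (pivot p).2 = range (n + 1) := by
    rw [facetLabels, facet_pivot hk, ← facetLabels, hlab]
  suffices (pivot p).1 ∈ simplices (n + 1) N ∧ (pivot p).2 ≤ n + 1 ∧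
      ¬((pivot p).2 = n + 1 ∧ (pivot p).1.1 ((pivot p).1.2 (Fin.last n)) = 0) from
    mem_sdiff.2 ⟨mem_doors.2 ⟨this.1, this.2.1, hlab'⟩, fun hb => this.2.2 (mem_filter.1 hb).2⟩
  obtain ⟨s, k⟩ := p
  simp only at hs hk hlab hint
  unfold pivot
  by_cases h0 : k = 0
  · subst h0
    refine ⟨shiftUp_mem_simplices hs (add_one_lt_of_facetLabels_zero hU hs hlab), le_rfl,
      fun h => ?_⟩
    simp only [if_true, shiftUp, Equiv.trans_apply, finRotate_last, Pi.add_apply,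
      Pi.single_eq_same] at h
    linarith [(mem_simplices.1 hs (s.2 0)).1]
  by_cases ht : k = n + 1
  · subst ht
    simp only [Nat.add_one_ne_zero, if_false, if_true]
    exact ⟨shiftDown_mem_simplices hs fun h => hint ⟨rfl, h⟩, Nat.zero_le _,
      fun h => Nat.add_one_ne_zero n h.1.symm⟩
  · simp only [h0, ht, if_false]
    exact ⟨mem_simplices.2 fun a => mem_simplices.1 hs a, hk, fun h => h.1⟩

theorem card_doors_sdiff_boundaryDoors {N : ℕ} {U : Fin (n + 1) → Set (Fin (n + 1) → ℤ)}
    (hU : SpernerBoundary N U) :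
    ((doors (n + 1) N U \ boundaryDoors n N U).card : ZMod 2) = 0 := by
  rw [card_eq_sum_ones, Nat.cast_sum, Nat.cast_one]
  refine sum_involution (fun p _ => pivot p) (fun _ _ => ZModModule.add_self _)
    (fun p hp _ => pivot_ne (mem_doors.1 (mem_sdiff.1 hp).1).2.1)
    (fun p hp => pivot_mem_doors_sdiff_boundaryDoors hU hp) (fun p _ => pivot_pivot p)

def liftPerm (σ : Perm (Fin n)) : Perm (Fin (n + 1)) where
  toFun := Fin.lastCases (Fin.last n) fun i => (σ i).castSucc
  invFun := Fin.lastCases (Fin.last n) fun i => (σ.symm i).castSucc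
  left_inv a := by cases a using Fin.lastCases <;> simp
  right_inv a := by cases a using Fin.lastCases <;> simp

@[simp] theorem liftPerm_last (σ : Perm (Fin n)) : liftPerm σ (Fin.last n) = Fin.last n := by
  simp [liftPerm]

@[simp] theorem liftPerm_castSucc (σ : Perm (Fin n)) (i : Fin n) :
    liftPerm σ i.castSucc = (σ i).castSucc := by
  simp [liftPerm]

@[simp] theorem liftPerm_symm_last (σ : Perm (Fin n)) :
    (liftPerm σ).symm (Fin.last n) = Fin.last n := by
  simp [liftPerm]

@[simp] theorem liftPerm_symm_castSucc (σ : Perm (Fin n)) (i : Fin n) :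
    (liftPerm σ).symm i.castSucc = (σ.symm i).castSucc := by
  simp [liftPerm]

theorem liftPerm_injective : Function.Injective (liftPerm (n := n)) := fun σ τ h =>
  Equiv.ext fun i => Fin.castSucc_injective n (by simpa using congrArg (· i.castSucc) h)

theorem exists_liftPerm_eq {π : Perm (Fin (n + 1))} (h : π (Fin.last n) = Fin.last n) :
    ∃ σ, liftPerm σ = π := by
  have hne (i : Fin n) : π i.castSucc ≠ Fin.last n := fun hi =>
    (Fin.castSucc_lt_last i).ne (π.injective (hi.trans h.symm))
  let f : Fin n → Fin n := fun i => (π i.castSucc).castPred (hne i)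
  have hf : Function.Injective f := fun i j hij =>
    Fin.castSucc_injective n (π.injective (by simpa [f] using congrArg Fin.castSucc hij))
  refine ⟨Equiv.ofBijective f (Finite.injective_iff_bijective.1 hf), Equiv.ext fun a => ?_⟩
  cases a using Fin.lastCases with
  | last => rw [liftPerm_last, h]
  | cast i => simp [f]

theorem vertex_snoc_zero (s : Simplex n) {j : ℕ} (hj : j ≤ n) :
    vertex (Fin.snoc s.1 0, liftPerm s.2) j = Fin.snoc (vertex s j) 0 := by
  funext a
  cases a using Fin.lastCases with
  | last => simp [vertex, hj]
  | cast i => simp [vertex]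

theorem apply_last_eq_last_of_mem_boundaryDoors {N : ℕ}
    {U : Fin (n + 1) → Set (Fin (n + 1) → ℤ)} (hU : SpernerBoundary N U)
    {p : Simplex (n + 1) × ℕ} (hp : p ∈ boundaryDoors n N U) :
    p.1.2 (Fin.last n) = Fin.last n := by
  obtain ⟨hdoor, hk, hzero⟩ := mem_filter.1 hp
  obtain ⟨hs, -, hlab⟩ := mem_doors.1 hdoor
  set c := p.1.2 (Fin.last n)
  have hmiss : (c : ℕ) + 1 ∉ facetLabels U p.1 p.2 := by
    rw [facetLabels_eq, hk]
    intro hmem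
    obtain ⟨j, hj, hlabj⟩ := mem_image.1 hmem
    have hjn : j ≤ n := by
      obtain ⟨hj₁, hj₂⟩ := mem_erase.1 hj
      rw [mem_range] at hj₂
      omega
    refine notMem_of_label_eq_succ hlabj ((hU _ (inBox_vertex hs j) c).1 ?_)
    simp [vertex, c, hzero, Fin.val_last, hjn]
  rw [hlab, mem_range, not_lt] at hmiss
  exact Fin.ext (by rw [Fin.val_last]; omega)

theorem facetLabels_snoc_zero {N : ℕ} {U : Fin (n + 1) → Set (Fin (n + 1) → ℤ)}
    (hU : SpernerBoundary N U) {s : Simplex n} (hs : s ∈ simplices n N) :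
    facetLabels U (Fin.snoc s.1 0, liftPerm s.2) (n + 1) =
      (range (n + 1)).image fun j => label (faceRestrict U) (vertex s j) := by
  rw [facetLabels_eq, range_succ_erase_self]
  refine image_congr fun j hj => ?_
  have hbox := (inBox_vertex hs j).snoc_zero
  simp only [vertex_snoc_zero s (Nat.lt_succ_iff.1 (mem_range.1 hj))]
  exact label_snoc_zero ((hU _ hbox _).1 (Fin.snoc_last _ _))

theorem card_boundaryDoors {N : ℕ} {U : Fin (n + 1) → Set (Fin (n + 1) → ℤ)}
    (hU : SpernerBoundary N U) :
    (boundaryDoors n N U).card = (fullyLabeled n N (faceRestrict U)).card := by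
  have hN : 0 < N := by
    by_contra! hN
    have h0 : InBox N (0 : Fin (n + 1) → ℤ) := fun _ => by simp
    exact (hU 0 h0 0).2 (by rw [Pi.zero_apply]; omega) ((hU 0 h0 0).1 rfl)
  symm
  refine card_bij (fun s _ => ((Fin.snoc s.1 0, liftPerm s.2), n + 1)) (fun s hs => ?_)
    (fun s _ t _ hst => ?_) (fun p hp => ?_)
  · obtain ⟨hs, hlab⟩ := mem_filter.1 hs
    refine mem_filter.2 ⟨mem_doors.2 ⟨mem_simplices.2 fun a => ?_, le_rfl, ?_⟩, rfl, by simp⟩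
    · cases a using Fin.lastCases with
      | last => simpa using hN
      | cast a => simpa using mem_simplices.1 hs a
    · rw [facetLabels_snoc_zero hU hs, hlab]
  · simp only [Prod.mk.injEq, and_true] at hst
    exact Prod.ext (Fin.snoc_injective2 hst.1).1 (liftPerm_injective hst.2)
  · obtain ⟨⟨x, π⟩, k⟩ := p
    have hπ := apply_last_eq_last_of_mem_boundaryDoors hU hp
    obtain ⟨hdoor, rfl, hzero⟩ := mem_filter.1 hp
    obtain ⟨hs, -, hlab⟩ := mem_doors.1 hdoor
    obtain ⟨σ, rfl⟩ := exists_liftPerm_eq hπ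
    simp only [hπ] at hzero
    have hx : Fin.snoc (Fin.init x) 0 = x := by rw [← hzero, Fin.snoc_init_self]
    have hs' : (Fin.init x, σ) ∈ simplices n N :=
      mem_simplices.2 fun a => mem_simplices.1 hs a.castSucc
    refine ⟨(Fin.init x, σ), mem_filter.2 ⟨hs', ?_⟩, by simp [hx]⟩
    rw [← facetLabels_snoc_zero hU hs']
    simpa [hx] using hlab

theorem card_fullyLabeled {N : ℕ} {U : Fin n → Set (Fin n → ℤ)} (hU : SpernerBoundary N U) :
    ((fullyLabeled n N U).card : ZMod 2) = 1 := by
  induction n with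
  | zero =>
    have hall : fullyLabeled 0 N U = simplices 0 N :=
      filter_true_of_mem fun s _ => by simp [Nat.le_zero.1 (label_le U _)]
    simp [hall, simplices]
  | succ n ih =>
    have hsub : boundaryDoors n N U ⊆ doors (n + 1) N U := filter_subset _ _
    rw [← card_doors_eq_card_fullyLabeled, ← card_sdiff_add_card_eq_card hsub, Nat.cast_add,
      card_doors_sdiff_boundaryDoors hU, zero_add, card_boundaryDoors hU]
    exact ih (spernerBoundary_faceRestrict hU)

theorem _root_.exists_mixed_cell {n N : ℕ} {U : Fin n → Set (Fin n → ℤ)}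
    (hU : SpernerBoundary N U) :
    ∃ c : Fin n → ℤ, (∀ a, 0 ≤ c a ∧ c a < N) ∧ ∀ i,
      (∃ v : Fin n → ℤ, (∀ a, v a = c a ∨ v a = c a + 1) ∧ v ∈ U i) ∧
      (∃ v : Fin n → ℤ, (∀ a, v a = c a ∨ v a = c a + 1) ∧ v ∉ U i) := by
  obtain ⟨s, hs⟩ : (fullyLabeled n N U).Nonempty := by
    by_contra h
    simpa [not_nonempty_iff_eq_empty.1 h] using card_fullyLabeled hU
  obtain ⟨hs, hlab⟩ := mem_filter.1 hs
  have hvertex (l : ℕ) (hl : l ≤ n) : ∃ j, label U (vertex s j) = l :=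
    let ⟨j, _, hj⟩ := mem_image.1 (hlab ▸ mem_range.2 (Nat.lt_succ_of_le hl)); ⟨j, hj⟩
  refine ⟨s.1, mem_simplices.1 hs, fun i => ⟨?_, ?_⟩⟩
  · obtain ⟨j, hj⟩ := hvertex 0 (Nat.zero_le n)
    exact ⟨_, vertex_apply_eq_or s j, mem_of_label_eq_zero hj i⟩
  · obtain ⟨j, hj⟩ := hvertex (i + 1) i.isLt
    exact ⟨_, vertex_apply_eq_or s j, notMem_of_label_eq_succ hj⟩

end Freudenthal

open Set Metric

/-! ### Poincaré–Miranda theorem and closed covers of the cube -/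

theorem IsCompact.exists_mem_forall_mem_of_forall_near {X ι : Type*} [PseudoMetricSpace X]
    {K : Set X} (hK : IsCompact K) {A : ι → Set X} (hA : ∀ i, IsClosed (A i))
    (h : ∀ δ > 0, ∃ c ∈ K, ∀ i, ∃ a ∈ A i, dist a c < δ) : ∃ x ∈ K, ∀ i, x ∈ A i := by
  by_contra! hne
  obtain ⟨δ, hδ, hball⟩ := lebesgue_number_lemma_of_metric hK (fun i => (hA i).isOpen_compl)
    fun x hx => mem_iUnion.2 (hne x hx)
  obtain ⟨c, hc, hnear⟩ := h δ hδ
  obtain ⟨i, hi⟩ := hball c hc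
  obtain ⟨a, ha, hac⟩ := hnear i
  exact hi (mem_ball.2 hac) ha

theorem div_natCast_mem_Icc {n N : ℕ} (hN : 0 < N) {v : Fin n → ℤ} (hv : InBox N v) :
    (fun a => (v a : ℝ) / N) ∈ Icc (0 : Fin n → ℝ) 1 := by
  have hN' : (0 : ℝ) < N := Nat.cast_pos.2 hN
  refine ⟨fun a => div_nonneg (Int.cast_nonneg (hv a).1) hN'.le, fun a => ?_⟩
  exact (div_le_one hN').2 (by exact_mod_cast (hv a).2)

theorem dist_div_natCast_le {n N : ℕ} (hN : 0 < N) {v c : Fin n → ℤ}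
    (hv : ∀ a, v a = c a ∨ v a = c a + 1) :
    dist (fun a => (v a : ℝ) / N) (fun a => (c a : ℝ) / N) ≤ 1 / N := by
  refine (dist_pi_le_iff (by positivity)).2 fun a => ?_
  rw [Real.dist_eq, ← sub_div, abs_div, Nat.abs_cast]
  gcongr
  rcases hv a with h | h <;> simp [h]

theorem poincare_miranda {n : ℕ} {φ : Fin n → (Fin n → ℝ) → ℝ}
    (hφ : ∀ i, ContinuousOn (φ i) (Icc 0 1))
    (h0 : ∀ i, ∀ x ∈ Icc (0 : Fin n → ℝ) 1, x i = 0 → φ i x ≤ 0)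
    (h1 : ∀ i, ∀ x ∈ Icc (0 : Fin n → ℝ) 1, x i = 1 → 0 < φ i x) :
    ∃ x ∈ Icc (0 : Fin n → ℝ) 1, ∀ i, φ i x = 0 := by
  let A : Fin n × Bool → Set (Fin n → ℝ) := fun p =>
    Icc 0 1 ∩ φ p.1 ⁻¹' (if p.2 then Ici 0 else Iic 0)
  have hA (p) : IsClosed (A p) := (hφ p.1).preimage_isClosed_of_isClosed isClosed_Icc
    (by split_ifs; exacts [isClosed_Ici, isClosed_Iic])
  suffices ∃ x ∈ Icc (0 : Fin n → ℝ) 1, ∀ p, x ∈ A p by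
    obtain ⟨x, hx, hxA⟩ := this
    exact ⟨x, hx, fun i => le_antisymm (by simpa [A] using (hxA (i, false)).2)
      (by simpa [A] using (hxA (i, true)).2)⟩
  refine isCompact_Icc.exists_mem_forall_mem_of_forall_near hA fun δ hδ => ?_
  obtain ⟨N, hN⟩ := exists_nat_gt (1 / δ)
  have hNpos : 0 < N := Nat.cast_pos.1 ((one_div_pos.2 hδ).trans hN)
  have hNδ : 1 / (N : ℝ) < δ := by
    rwa [div_lt_iff₀ (Nat.cast_pos.2 hNpos), mul_comm, ← div_lt_iff₀ hδ]
  set pt : (Fin n → ℤ) → Fin n → ℝ := fun v a => (v a : ℝ) / N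
  have hSperner : SpernerBoundary N fun i => {v | φ i (pt v) ≤ 0} := by
    intro v hv i
    refine ⟨fun hvi => h0 i _ (div_natCast_mem_Icc hNpos hv) (by simp [pt, hvi]),
      fun hvi => not_le.2 (h1 i _ (div_natCast_mem_Icc hNpos hv) ?_)⟩
    simp [hvi, hNpos.ne']
  obtain ⟨c, hc, hmixed⟩ := exists_mixed_cell hSperner
  have hbox (v : Fin n → ℤ) (hv : ∀ a, v a = c a ∨ v a = c a + 1) : InBox N v := by
    intro a
    have := hc a
    rcases hv a with h | h <;> rw [h] <;> omega
  refine ⟨pt c, div_natCast_mem_Icc hNpos fun a => ⟨(hc a).1, (hc a).2.le⟩, fun ⟨i, b⟩ => ?_⟩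
  obtain ⟨⟨u, hu, huU⟩, ⟨w, hw, hwU⟩⟩ := hmixed i
  cases b
  · exact ⟨pt u, ⟨div_natCast_mem_Icc hNpos (hbox u hu), by simpa using (huU : φ i (pt u) ≤ 0)⟩,
      (dist_div_natCast_le hNpos hu).trans_lt hNδ⟩
  · exact ⟨pt w, ⟨div_natCast_mem_Icc hNpos (hbox w hw),
      by simpa using (not_le.1 hwU).le⟩,
      (dist_div_natCast_le hNpos hw).trans_lt hNδ⟩


theorem exists_isClopen_of_forall_connectedComponent_disjoint {X : Type*} [TopologicalSpace X]
    [T2Space X] [CompactSpace X] {A B : Set X} (hA : IsClosed A) (hB : IsClosed B)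
    (h : ∀ x ∈ A, Disjoint (connectedComponent x) B) :
    ∃ W : Set X, IsClopen W ∧ A ⊆ W ∧ Disjoint W B := by
  let q : X → ConnectedComponents X := ConnectedComponents.mk
  have hq : Continuous q := ConnectedComponents.continuous_coe
  have hAB : q '' A ⊆ (q '' B)ᶜ := by
    rintro _ ⟨a, ha, rfl⟩ ⟨b, hb, hba⟩
    exact disjoint_left.1 (h a ha) (ConnectedComponents.coe_eq_coe'.1 hba) hb
  obtain ⟨C, hC, hAC, hCB⟩ := exists_clopen_of_closed_subset_open
    (hA.isCompact.image hq).isClosed (hB.isCompact.image hq).isClosed.isOpen_compl hAB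
  exact ⟨q ⁻¹' C, hC.preimage hq, image_subset_iff.1 hAC,
    disjoint_left.2 fun x hxC hxB => hCB hxC ⟨x, hxB, rfl⟩⟩

theorem IsCompact.exists_isClosed_partition {X : Type*} [TopologicalSpace X] [T2Space X]
    {L A B : Set X} (hL : IsCompact L) (hA : IsClosed A) (hB : IsClosed B)
    (h : ∀ S ⊆ L, IsCompact S → IsPreconnected S → (S ∩ A).Nonempty → Disjoint S B) :
    ∃ L₀ L₁ : Set X, IsClosed L₀ ∧ IsClosed L₁ ∧ L₀ ∪ L₁ = L ∧ Disjoint L₀ L₁ ∧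
      Disjoint L₁ A ∧ Disjoint L₀ B := by
  have : CompactSpace L := isCompact_iff_compactSpace.1 hL
  obtain ⟨W, hW, hAW, hWB⟩ := exists_isClopen_of_forall_connectedComponent_disjoint
    (hA.preimage continuous_subtype_val) (hB.preimage continuous_subtype_val) fun (x : L) hx => by
      have hS := h _ (Subtype.coe_image_subset L _)
        (isClosed_connectedComponent.isCompact.image continuous_subtype_val)
        (isPreconnected_connectedComponent.image _ continuous_subtype_val.continuousOn)
        ⟨(x : X), mem_image_of_mem _ mem_connectedComponent, hx⟩
      exact disjoint_left.2 fun y hy hyB => disjoint_left.1 hS (mem_image_of_mem _ hy) hyB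
  refine ⟨(↑) '' W, (↑) '' Wᶜ, (hW.isClosed.isCompact.image continuous_subtype_val).isClosed,
    (hW.compl.isClosed.isCompact.image continuous_subtype_val).isClosed, ?_, ?_, ?_, ?_⟩
  · rw [← image_union, union_compl_self, image_univ, Subtype.range_coe]
  · exact (disjoint_image_iff Subtype.val_injective).2 disjoint_compl_right
  · exact disjoint_left.2 fun _ ⟨y, hy, hyx⟩ hxA => hy (hAW (hyx ▸ hxA : (y : X) ∈ A))
  · exact disjoint_left.2 fun _ ⟨y, hy, hyx⟩ hxB =>
      disjoint_left.1 hWB hy (hyx ▸ hxB : (y : X) ∈ B)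

theorem IsPreconnected.exists_subset_of_subset_biUnion {ι X : Type*} [TopologicalSpace X]
    {S : Set X} (hS : IsPreconnected S) (hne : S.Nonempty) {s : Finset ι} {F : ι → Set X}
    (hF : ∀ i ∈ s, IsClosed (F i)) (hdisj : (s : Set ι).PairwiseDisjoint F)
    (hsub : S ⊆ ⋃ i ∈ s, F i) : ∃ i ∈ s, S ⊆ F i := by
  classical
  induction s using Finset.induction_on with
  | empty => exact (hne.ne_empty (by simpa using hsub)).elim
  | insert a s ha ih =>
    rw [Finset.set_biUnion_insert] at hsub
    have hFs : IsClosed (⋃ i ∈ s, F i) :=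
      isClosed_biUnion_finset fun i hi => hF i (Finset.mem_insert_of_mem hi)
    have hdisj' : Disjoint (F a) (⋃ i ∈ s, F i) := by
      refine disjoint_iUnion₂_right.2 fun i hi => hdisj (by simp) (by simp [hi]) ?_
      rintro rfl
      exact ha hi
    rcases isPreconnected_iff_subset_of_disjoint_closed.1 hS _ _ (hF a (by simp)) hFs hsub
      (by rw [hdisj'.inter_eq, inter_empty]) with h | h
    · exact ⟨a, by simp, h⟩
    · obtain ⟨i, hi, hSi⟩ := ih (fun i hi => hF i (Finset.mem_insert_of_mem hi))
        (hdisj.subset (by simp)) h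
      exact ⟨i, Finset.mem_insert_of_mem hi, hSi⟩

theorem exists_isPreconnected_connecting_faces_of_cover {n : ℕ} {K : Fin n → Set (Fin n → ℝ)}
    (hK : ∀ i, IsClosed (K i)) (hcover : Icc (0 : Fin n → ℝ) 1 ⊆ ⋃ i, K i) :
    ∃ i, ∃ S ⊆ K i ∩ Icc 0 1, IsCompact S ∧ IsPreconnected S ∧
      (∃ x ∈ S, x i = 0) ∧ (∃ x ∈ S, x i = 1) := by
  by_contra! h
  have hface (i : Fin n) (c : ℝ) : IsClosed {x : Fin n → ℝ | x i = c} :=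
    isClosed_eq (continuous_apply i) continuous_const
  have hsplit (i : Fin n) := (isCompact_Icc.inter_left (hK i)).exists_isClosed_partition
    (hface i 0) (hface i 1) fun S hS hc hp ⟨x, hxS, hx⟩ =>
      disjoint_left.2 fun y hy hy1 => h i S hS hc hp ⟨x, hxS, hx⟩ y hy hy1
  choose L₀ L₁ hL₀ hL₁ hunion hdisj hL₁A hL₀B using hsplit
  let E₀ (i : Fin n) := (Icc 0 1 ∩ {x | x i = 0}) ∪ L₀ i
  let E₁ (i : Fin n) := (Icc 0 1 ∩ {x | x i = 1}) ∪ L₁ i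
  have hE (i : Fin n) : Disjoint (E₀ i) (E₁ i) := by
    refine disjoint_union_left.2 ⟨disjoint_union_right.2 ⟨?_, ?_⟩, disjoint_union_right.2 ⟨?_, ?_⟩⟩
    · exact disjoint_left.2 fun x hx hx' => zero_ne_one ((hx.2 : x i = 0).symm.trans hx'.2)
    · exact (hL₁A i).symm.mono_left inter_subset_right
    · exact (hL₀B i).mono_right inter_subset_right
    · exact hdisj i
  choose g hg₀ hg₁ _ using fun i => exists_continuous_zero_one_of_isClosed
    ((isClosed_Icc.inter (hface i 0)).union (hL₀ i))
    ((isClosed_Icc.inter (hface i 1)).union (hL₁ i)) (hE i)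
  obtain ⟨w, hw, hzero⟩ := poincare_miranda (φ := fun i x => g i x - 1 / 2)
    (fun i => ((g i).continuous.sub continuous_const).continuousOn)
    (fun i x hx hxi => by simp [hg₀ i (Or.inl ⟨hx, hxi⟩ : x ∈ E₀ i)])
    (fun i x hx hxi => by norm_num [hg₁ i (Or.inl ⟨hx, hxi⟩ : x ∈ E₁ i)])
  obtain ⟨j, hj⟩ := mem_iUnion.1 (hcover hw)
  have hwj : w ∈ L₀ j ∪ L₁ j := hunion j ▸ ⟨hj, hw⟩
  have := hzero j
  rcases hwj with hw₀ | hw₁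
  · simp [hg₀ j (Or.inr hw₀ : w ∈ E₀ j)] at this
  · norm_num [hg₁ j (Or.inr hw₁ : w ∈ E₁ j)] at this

/-! ### Bricks -/

namespace Brick

noncomputable def threshold (m j : ℕ) : ℝ := j / (4 * (m + 1))

theorem threshold_nonneg (m j : ℕ) : 0 ≤ threshold m j := by unfold threshold; positivity

theorem threshold_lt_succ (m j : ℕ) : threshold m j < threshold m (j + 1) := by
  unfold threshold
  gcongr
  simp

theorem threshold_le_quarter {m j : ℕ} (h : j ≤ m + 1) : threshold m j ≤ 1 / 4 := by
  unfold threshold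
  rw [div_le_div_iff₀ (by positivity) (by norm_num)]
  have : (j : ℝ) ≤ m + 1 := by exact_mod_cast h
  linarith

noncomputable def pieceCoord (m j : ℕ) (z : ℤ) (b : Bool) : Set ℝ :=
  if b then Icc (z - threshold m j) (z + threshold m j)
  else Icc (z + threshold m (j + 1)) (z + 1 - threshold m (j + 1))

noncomputable def piece (m j : ℕ) (z : Fin m → ℤ) (b : Fin m → Bool) : Set (Fin m → ℝ) :=
  univ.pi fun a => pieceCoord m j (z a) (b a)

theorem isClosed_piece (m j : ℕ) (z : Fin m → ℤ) (b : Fin m → Bool) :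
    IsClosed (piece m j z b) :=
  isClosed_set_pi fun a _ => by unfold pieceCoord; split_ifs <;> exact isClosed_Icc

theorem abs_sub_lt_one_of_mem_pieceCoord {m j : ℕ} (hj : j ≤ m) {z : ℤ} {b : Bool} {r s : ℝ}
    (hr : r ∈ pieceCoord m j z b) (hs : s ∈ pieceCoord m j z b) : |r - s| < 1 := by
  have h1 := threshold_le_quarter (m := m) (j := j) (by omega)
  have h2 := (threshold_nonneg m j).trans_lt (threshold_lt_succ m j)
  unfold pieceCoord at hr hs
  split_ifs at hr hs <;> rw [abs_lt] <;> constructor <;> linarith [hr.1, hr.2, hs.1, hs.2]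

theorem dist_lt_one_of_mem_piece {m j : ℕ} (hj : j ≤ m) {z : Fin m → ℤ} {b : Fin m → Bool}
    {y y' : Fin m → ℝ} (hy : y ∈ piece m j z b) (hy' : y' ∈ piece m j z b) : dist y y' < 1 :=
  (dist_pi_lt_iff one_pos).2 fun a =>
    abs_sub_lt_one_of_mem_pieceCoord hj (hy a (mem_univ a)) (hy' a (mem_univ a))

theorem eq_of_mem_pieceCoord {m j : ℕ} (hj : j ≤ m) {z z' : ℤ} {b b' : Bool} {r : ℝ}
    (h : r ∈ pieceCoord m j z b) (h' : r ∈ pieceCoord m j z' b') : z = z' ∧ b = b' := by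
  have hq := threshold_le_quarter (m := m) (j := j) (by omega)
  have hlt := threshold_lt_succ m j
  have hpos := (threshold_nonneg m j).trans_lt hlt
  have hfar {w : ℤ} (hw : r ∈ Icc (w + threshold m (j + 1)) (w + 1 - threshold m (j + 1)))
      (k : ℤ) : threshold m (j + 1) ≤ |r - k| := by
    rcases le_or_gt k w with hk | hk
    · have : (k : ℝ) ≤ w := by exact_mod_cast hk
      rw [abs_of_nonneg (by linarith [hw.1])]
      linarith [hw.1]
    · have : (w : ℝ) + 1 ≤ k := by exact_mod_cast hk
      rw [abs_of_nonpos (by linarith [hw.2])]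
      linarith [hw.2]
  unfold pieceCoord at h h'
  cases b <;> cases b' <;> simp only [Bool.false_eq_true, if_true, if_false] at h h'
  · refine ⟨le_antisymm ?_ ?_, rfl⟩ <;> by_contra! hzz
    · have : (z' : ℝ) + 1 ≤ z := by exact_mod_cast hzz
      linarith [h.1, h'.2]
    · have : (z : ℝ) + 1 ≤ z' := by exact_mod_cast hzz
      linarith [h.2, h'.1]
  · have : |r - z'| ≤ threshold m j := abs_le.2 ⟨by linarith [h'.1], by linarith [h'.2]⟩
    linarith [hfar h z']
  · have : |r - z| ≤ threshold m j := abs_le.2 ⟨by linarith [h.1], by linarith [h.2]⟩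
    linarith [hfar h' z]
  · refine ⟨?_, rfl⟩
    have h₁ : ((z - z' : ℤ) : ℝ) < 1 := by push_cast; linarith [h.1, h'.2]
    have h₂ : (-1 : ℝ) < ((z - z' : ℤ) : ℝ) := by push_cast; linarith [h.2, h'.1]
    have : z - z' < 1 := by exact_mod_cast h₁
    have : -1 < z - z' := by exact_mod_cast h₂
    omega

theorem disjoint_piece {m j : ℕ} (hj : j ≤ m) {z z' : Fin m → ℤ} {b b' : Fin m → Bool}
    (hne : (z, b) ≠ (z', b')) : Disjoint (piece m j z b) (piece m j z' b') :=
  disjoint_left.2 fun _ h h' => hne <| Prod.ext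
    (funext fun a => (eq_of_mem_pieceCoord hj (h a (mem_univ a)) (h' a (mem_univ a))).1)
    (funext fun a => (eq_of_mem_pieceCoord hj (h a (mem_univ a)) (h' a (mem_univ a))).2)

theorem exists_threshold_gap {m : ℕ} (y : Fin m → ℝ) :
    ∃ j ≤ m, ∀ a, |y a - round (y a)| ≤ threshold m j ∨
      threshold m (j + 1) ≤ |y a - round (y a)| := by
  -- `idx a = j` as soon as the distance from `y a` to `ℤ` lies in the `j`-th gap
  let idx : Fin m → ℕ := fun a => ⌊|y a - round (y a)| * (4 * (m + 1))⌋₊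
  obtain ⟨j, hj, hjidx⟩ := Finset.exists_mem_notMem_of_card_lt_card
    (s := Finset.univ.image idx) (t := Finset.range (m + 1))
    (Finset.card_image_le.trans_lt (by simp))
  refine ⟨j, Nat.lt_succ_iff.1 (Finset.mem_range.1 hj), fun a => ?_⟩
  by_contra! hgap
  apply hjidx
  refine Finset.mem_image.2 ⟨a, Finset.mem_univ a, (Nat.floor_eq_iff (by positivity)).2 ⟨?_, ?_⟩⟩
  · have := hgap.1
    unfold threshold at this
    rw [div_lt_iff₀ (by positivity)] at this
    exact this.le
  · have := hgap.2
    unfold threshold at this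
    rw [lt_div_iff₀ (by positivity)] at this
    exact_mod_cast this

theorem exists_mem_piece {m : ℕ} (y : Fin m → ℝ) :
    ∃ j ≤ m, ∃ z b, y ∈ piece m j z b ∧ ∀ a, |(z a : ℝ) - y a| ≤ 1 := by
  obtain ⟨j, hj, hgap⟩ := exists_threshold_gap y
  let near (a : Fin m) : Bool := decide (|y a - round (y a)| ≤ threshold m j)
  refine ⟨j, hj, fun a => if near a then round (y a) else ⌊y a⌋, near, fun a _ => ?_, fun a => ?_⟩
  · by_cases ha : |y a - round (y a)| ≤ threshold m j
    · simp only [near, ha, decide_true, if_true, pieceCoord]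
      constructor <;> linarith [abs_le.1 ha]
    · have hfar := (hgap a).resolve_left ha
      have h₁ := round_le (y a) ⌊y a⌋
      have h₂ := round_le (y a) (⌊y a⌋ + 1)
      push_cast at h₂
      rw [abs_of_nonneg (a := y a - ⌊y a⌋) (sub_nonneg.2 (Int.floor_le _))] at h₁
      rw [abs_of_nonpos (a := y a - (⌊y a⌋ + 1)) (by linarith [Int.lt_floor_add_one (y a)])] at h₂
      simp only [near, ha, decide_false, Bool.false_eq_true, if_false, pieceCoord]
      constructor <;> linarith
  · by_cases ha : near a
    · simp only [ha, if_true]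
      rw [abs_sub_comm]
      linarith [abs_sub_round (y a)]
    · simp only [ha, Bool.false_eq_true, if_false]
      rw [abs_le]
      constructor <;> linarith [Int.floor_le (y a), Int.lt_floor_add_one (y a)]

theorem exists_finset_forall_mem_piece (m : ℕ) (R : ℝ) :
    ∃ ℬ : Finset ((Fin m → ℤ) × (Fin m → Bool)), ∀ y : Fin m → ℝ, ‖y‖ ≤ R →
      ∃ j ≤ m, ∃ zb ∈ ℬ, y ∈ piece m j zb.1 zb.2 := by
  refine ⟨Fintype.piFinset (fun _ => Finset.Icc (-⌈R⌉ - 1) (⌈R⌉ + 1)) ×ˢ Finset.univ,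
    fun y hy => ?_⟩
  obtain ⟨j, hj, z, b, hmem, hz⟩ := exists_mem_piece y
  refine ⟨j, hj, (z, b), Finset.mem_product.2 ⟨Fintype.mem_piFinset.2 fun a => ?_,
    Finset.mem_univ b⟩, hmem⟩
  have h₁ := abs_le.1 (hz a)
  have h₂ := abs_le.1 ((norm_le_pi_norm y a).trans hy)
  have h₃ := Int.le_ceil R
  have h₄ : (z a : ℝ) ≤ ⌈R⌉ + 1 := by linarith
  have h₅ : -⌈R⌉ - 1 ≤ (z a : ℝ) := by linarith
  exact Finset.mem_Icc.2 ⟨by exact_mod_cast h₅, by exact_mod_cast h₄⟩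

end Brick

theorem approx_level_set_connects_opposite_faces (n : ℕ) (hn : 1 ≤ n)
    (f : (Fin n → ℝ) → (Fin (n - 1) → ℝ))
    (hf : ContinuousOn f (Set.Icc (0 : Fin n → ℝ) 1)) (ε : ℝ) (hε : 0 < ε) :
    ∃ (p : Fin (n - 1) → ℝ) (S : Set (Fin n → ℝ)),
      IsCompact S ∧ IsPreconnected S ∧ S ⊆ Set.Icc (0 : Fin n → ℝ) 1 ∧
      (∀ x ∈ S, f x ∈ Metric.ball p ε) ∧
      ∃ i : Fin n, (∃ x ∈ S, x i = 0) ∧ (∃ x ∈ S, x i = 1) := by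
  set g : (Fin n → ℝ) → Fin (n - 1) → ℝ := fun x => ε⁻¹ • f x
  have hg : ContinuousOn g (Icc 0 1) := hf.const_smul ε⁻¹
  obtain ⟨R, hR⟩ := isCompact_Icc.exists_bound_of_continuousOn hg
  obtain ⟨ℬ, hℬ⟩ := Brick.exists_finset_forall_mem_piece (n - 1) R
  let F (i : Fin n) (zb : (Fin (n - 1) → ℤ) × (Fin (n - 1) → Bool)) : Set (Fin n → ℝ) :=
    Icc 0 1 ∩ g ⁻¹' Brick.piece (n - 1) i zb.1 zb.2
  have hF (i zb) : IsClosed (F i zb) :=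
    hg.preimage_isClosed_of_isClosed isClosed_Icc (Brick.isClosed_piece _ _ _ _)
  have hcover : Icc 0 1 ⊆ ⋃ i, ⋃ zb ∈ ℬ, F i zb := fun x hx =>
    let ⟨j, hj, zb, hzb, hgx⟩ := hℬ (g x) (hR x hx)
    mem_iUnion.2 ⟨⟨j, by omega⟩, mem_iUnion₂.2 ⟨zb, hzb, hx, hgx⟩⟩
  obtain ⟨i, S, hSK, hSc, hSp, ⟨x₀, hx₀S, hx₀⟩, hx₁⟩ :=
    exists_isPreconnected_connecting_faces_of_cover
      (fun i => isClosed_biUnion_finset fun zb _ => hF i zb) hcover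
  have hi : (i : ℕ) ≤ n - 1 := by omega
  obtain ⟨zb, -, hSzb⟩ := hSp.exists_subset_of_subset_biUnion ⟨x₀, hx₀S⟩ (fun zb _ => hF i zb)
    (fun _ _ _ _ hne => ((Brick.disjoint_piece hi hne).preimage g).mono inter_subset_right
      inter_subset_right) fun x hx => (hSK hx).1
  refine ⟨f x₀, S, hSc, hSp, fun x hx => (hSK hx).2, fun x hx => ?_, i, ⟨x₀, hx₀S, hx₀⟩, hx₁⟩
  have := Brick.dist_lt_one_of_mem_piece hi (hSzb hx).2 (hSzb hx₀S).2
  rwa [dist_smul₀, Real.norm_of_nonneg (inv_nonneg.2 hε.le), inv_mul_lt_iff₀ hε, mul_one] at this
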